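/- Let k ≥ 1 and let τ = (τ_n : V_{n+1}* → V_n*)_{n≥0} be a directive sequence of morphisms satisfying Property (P_k), with V_n = {v_{1,n},…,v_{m_n,n}} for n ≥ 1. Then for every n ≥ 1 and every 1 ≤ i ≤ k, the words τ_{[0,n)}(v_{i,n}) and τ_{[0,n)}(v_{i+1,n}) are not prefix dependent, i.e. neither is a prefix of the other. -/

import Mathlib

open Filter Topology MeasureTheory

namespace AsympSOE

/-! ### Subshift basics -/

/-- Shift of a bi-infinite sequence by `n` (the `n`-th power of the left shift `S`). -/
def SShift {A : Type*} (n : ℤ) (x : ℤ → A) : ℤ → A := fun i => x (i + n)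

/-- Two bi-infinite sequences are (left) asymptotic: they agree on a left half-line. -/
def SAsymp {A : Type*} (x y : ℤ → A) : Prop := ∃ ℓ : ℤ, ∀ i < ℓ, x i = y i

/-- `y` belongs to the shift-orbit of `x`. -/
def SSameOrbit {A : Type*} (x y : ℤ → A) : Prop := ∃ n : ℤ, SShift n x = y

/-- The shift-orbits of `x` and `y` are asymptotic. -/
def SOrbAsymp {A : Type*} (x y : ℤ → A) : Prop :=
  ∃ n n' : ℤ, SAsymp (SShift n x) (SShift n' y)

/-- `C` is an asymptotic component of the subshift `X`: it is the `SOrbAsymp`-class of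
some `x ∈ X` and contains at least two distinct orbits. -/
def SIsAsymComponent {A : Type*} (X : Set (ℤ → A)) (C : Set (ℤ → A)) : Prop :=
  ∃ x ∈ X, C = {y ∈ X | SOrbAsymp x y} ∧ ∃ y ∈ X, SOrbAsymp x y ∧ ¬ SSameOrbit x y

/-- A subshift: a nonempty closed shift-invariant set of bi-infinite sequences. -/
def IsSubshift {A : Type*} [TopologicalSpace A] (X : Set (ℤ → A)) : Prop :=
  X.Nonempty ∧ IsClosed X ∧ (∀ x ∈ X, SShift 1 x ∈ X) ∧ (∀ x ∈ X, SShift (-1) x ∈ X)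

/-- A minimal subshift: every orbit is dense. -/
def IsMinimalSubshift {A : Type*} [TopologicalSpace A] (X : Set (ℤ → A)) : Prop :=
  IsSubshift X ∧ ∀ x ∈ X, ∀ y ∈ X, y ∈ closure {z | SSameOrbit x z}

/-- The words of length `n` appearing in points of `X`. -/
def langOf {A : Type*} (X : Set (ℤ → A)) (n : ℕ) : Set (List A) :=
  {w | ∃ x ∈ X, ∃ a : ℤ, (List.range n).map (fun t => x (a + t)) = w}

/-- The complexity function of a subshift. -/
noncomputable def complexityOf {A : Type*} (X : Set (ℤ → A)) (n : ℕ) : ℕ :=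
  (langOf X n).ncard

/-- A Toeplitz sequence. -/
def IsToeplitzSeq {A : Type*} (x : ℤ → A) : Prop :=
  ∀ n : ℤ, ∃ p : ℕ, 0 < p ∧ ∀ k : ℤ, x (n + k * p) = x n

/-- A Toeplitz subshift: the shift-orbit closure of a Toeplitz sequence. -/
def IsToeplitzSubshift {A : Type*} [TopologicalSpace A] (X : Set (ℤ → A)) : Prop :=
  ∃ x : ℤ → A, IsToeplitzSeq x ∧ X = closure {z | SSameOrbit x z}

/-! ### General topological dynamical systems -/

/-- The (full) orbit of `x` under the invertible map `T`. -/
def orbitEq {X : Type*} (T : Equiv.Perm X) (x : X) : Set X := {y | ∃ n : ℤ, (T ^ n) x = y}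

/-- `x` and `y` are (left) asymptotic for `T`: `dist (T⁻ⁿ x) (T⁻ⁿ y) → 0` as `n → ∞`. -/
def MAsymp {X : Type*} [MetricSpace X] (T : Equiv.Perm X) (x y : X) : Prop :=
  Tendsto (fun n : ℕ => dist ((T ^ (-(n : ℤ))) x) ((T ^ (-(n : ℤ))) y)) atTop (𝓝 0)

/-- The orbits of `x` and `y` are asymptotic. -/
def MOrbAsymp {X : Type*} [MetricSpace X] (T : Equiv.Perm X) (x y : X) : Prop :=
  ∃ n n' : ℤ, MAsymp T ((T ^ n) x) ((T ^ n') y)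

/-- `C` is an asymptotic component of the system `(X, T)`: the `MOrbAsymp`-class of some
point `x`, containing at least two distinct orbits. -/
def MIsAsymComponent {X : Type*} [MetricSpace X] (T : Equiv.Perm X) (C : Set X) : Prop :=
  ∃ x, C = {y | MOrbAsymp T x y} ∧ ∃ y, MOrbAsymp T x y ∧ y ∉ orbitEq T x

/-- A minimal Cantor system: the compact metric space `X` is a Cantor space (nonempty,
totally disconnected, without isolated points) and every `T`-orbit is dense. -/
def IsMinimalCantor {X : Type*} [MetricSpace X] (T : X ≃ₜ X) : Prop :=
  CompactSpace X ∧ TotallyDisconnectedSpace X ∧ Nonempty X ∧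
    (∀ x : X, Filter.NeBot (𝓝[≠] x)) ∧ ∀ x : X, Dense (orbitEq T.toEquiv x)

/-- Strong orbit equivalence of the systems `(X, T)` and `(Y, S)`: an orbit equivalence
whose two orbit cocycles each have at most one point of discontinuity. -/
def IsSOE {X Y : Type*} [TopologicalSpace X] [TopologicalSpace Y]
    (T : X ≃ₜ X) (S : Y ≃ₜ Y) : Prop :=
  ∃ φ : X ≃ₜ Y,
    (∀ x : X, φ '' orbitEq T.toEquiv x = orbitEq S.toEquiv (φ x)) ∧
    ∃ α β : X → ℤ,
      (∀ x, φ (T x) = (S.toEquiv ^ α x) (φ x)) ∧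
      (∀ x, φ ((T.toEquiv ^ β x) x) = S (φ x)) ∧
      {x | ¬ContinuousAt α x}.Subsingleton ∧
      {x | ¬ContinuousAt β x}.Subsingleton

/-- The automorphism group of a system `(Y, S)`, as a subgroup of the permutation group:
the bi-continuous bijections commuting with `S`. -/
def autGroup {Y : Type*} [TopologicalSpace Y] (S : Y ≃ₜ Y) : Subgroup (Equiv.Perm Y) where
  carrier := {φ | Continuous φ ∧ Continuous φ.symm ∧ ∀ y, φ (S y) = S (φ y)}
  one_mem' := ⟨continuous_id, continuous_id, fun _ => rfl⟩
  mul_mem' := by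
    rintro a b ⟨ha1, ha2, ha3⟩ ⟨hb1, hb2, hb3⟩
    refine ⟨ha1.comp hb1, hb2.comp ha2, fun y => ?_⟩
    simp only [Equiv.Perm.mul_apply, hb3, ha3]
  inv_mem' := by
    rintro a ⟨ha1, ha2, ha3⟩
    refine ⟨by simpa using ha2, by exact ha1, fun y => ?_⟩
    have h : a (S (a⁻¹ y)) = S y := by
      rw [ha3 (a⁻¹ y)]; exact congrArg S (Equiv.apply_symm_apply a y)
    calc a⁻¹ (S y) = a⁻¹ (a (S (a⁻¹ y))) := by rw [h]
    _ = S (a⁻¹ y) := Equiv.symm_apply_apply a _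

/-! ### S-adic subshifts and Property (P_k) -/

/-- The word `x_a x_{a+1} … x_{a+len-1}` read in the bi-infinite sequence `x`. -/
def factorWord {A : Type*} (x : ℤ → A) (a : ℤ) (len : ℕ) : List A :=
  (List.range len).map fun t => x (a + t)

/-- `tauIter τ n d a = (τ_n ∘ τ_{n+1} ∘ … ∘ τ_{n+d-1}) (a)`: the image of the letter `a`
of level `n + d` under the composition of the directive sequence down to level `n`.
In particular `tauIter τ 0 n` is `τ_{[0,n)}`. -/
def tauIter (τ : ℕ → ℕ → List ℕ) (n : ℕ) : ℕ → ℕ → List ℕ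
  | 0, a => [a]
  | d + 1, a => (τ (n + d) a).flatMap (tauIter τ n d)

/-- The S-adic subshift generated by the directive sequence `τ` at level `n`
(the level-`n` alphabet consists of the naturals `< m n`). -/
def SAdicLevel (m : ℕ → ℕ) (τ : ℕ → ℕ → List ℕ) (n : ℕ) : Set (ℤ → ℕ) :=
  {x | (∀ i, x i < m n) ∧
    ∀ (a : ℤ) (len : ℕ), ∃ N c, n < N ∧ c < m N ∧
      factorWord x a len <:+: tauIter τ n (N - n) c}

/-- The prescribed prefix `v_1² v_2² … v_{a}² v_{a+1} … v_{k+1}` in `0`-based letters: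
letters `0, …, a-1` doubled, followed by the letters `a, …, k`. -/
def pkPrefix (k a : ℕ) : List ℕ :=
  (List.range a).flatMap (fun j => [j, j]) ++ (List.range (k + 1 - a)).map (fun j => a + j)

/-- Property `(P_k)` for a directive sequence `τ` with alphabet sizes `m`: `τ₀` is a
(non-erasing) hat morphism and, for every `n ≥ 1`, `τ_n` is primitive, has the prescribed
prefixes, ends with the last letter of the level-`n` alphabet, and no image contains the
word (last letter)(first letter).  Level-`n` letters are `0, 1, …, m n - 1`, so the
letter `v_{i,n}` of the paper is `i - 1`. -/
def PropertyPk (k : ℕ) (m : ℕ → ℕ) (τ : ℕ → ℕ → List ℕ) : Prop :=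
  (∀ n, 1 ≤ n → k < m n) ∧
  (∀ n a, a < m (n + 1) → τ n a ≠ [] ∧ ∀ c ∈ τ n a, c < m n) ∧
  (∀ a b, a < m 1 → b < m 1 → a ≠ b → ∀ c, c ∈ τ 0 a → c ∉ τ 0 b) ∧
  (∀ n, 1 ≤ n → ∀ a, a < m (n + 1) → ∀ b, b < m n → b ∈ τ n a) ∧
  (∀ n, 1 ≤ n → ∀ a, a ≤ k → pkPrefix k a <+: τ n a) ∧
  (∀ n, 1 ≤ n → ∀ a, k < a → a < m (n + 1) → (List.replicate (a + 1) 0 ++ [1]) <+: τ n a) ∧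
  (∀ n, 1 ≤ n → ∀ a, a < m (n + 1) →
    ([m n - 1] <:+ τ n a ∧ ¬ ([m n - 1, 0] <:+: τ n a)))

/-- Property `(P_∞)`: as `(P_k)` but with `k` replaced by `n` at level `n`. -/
def PropertyPinf (m : ℕ → ℕ) (τ : ℕ → ℕ → List ℕ) : Prop :=
  (∀ n, 1 ≤ n → n < m n) ∧
  (∀ n a, a < m (n + 1) → τ n a ≠ [] ∧ ∀ c ∈ τ n a, c < m n) ∧
  (∀ a b, a < m 1 → b < m 1 → a ≠ b → ∀ c, c ∈ τ 0 a → c ∉ τ 0 b) ∧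
  (∀ n, 1 ≤ n → ∀ a, a < m (n + 1) → ∀ b, b < m n → b ∈ τ n a) ∧
  (∀ n, 1 ≤ n → ∀ a, a ≤ n → pkPrefix n a <+: τ n a) ∧
  (∀ n, 1 ≤ n → ∀ a, n < a → a < m (n + 1) → (List.replicate (a + 1) 0 ++ [1]) <+: τ n a) ∧
  (∀ n, 1 ≤ n → ∀ a, a < m (n + 1) →
    ([m n - 1] <:+ τ n a ∧ ¬ ([m n - 1, 0] <:+: τ n a)))

/-- The (integer) position in the concatenation `σ(y)` at which the block `σ(y_j)` starts,
the block `σ(y_0)` starting at position `0`. -/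
def cumLen (σ : ℕ → List ℕ) (y : ℤ → ℕ) (j : ℤ) : ℤ :=
  if 0 ≤ j then ((List.range j.toNat).map fun t => ((σ (y t)).length : ℤ)).sum
  else -(((List.range (-j).toNat).map fun t => ((σ (y (j + t))).length : ℤ)).sum)

/-- `x = S^r (σ(y))`, where `σ(y) = … σ(y_{-1}).σ(y_0) σ(y_1) …` is the concatenated image
of the bi-infinite sequence `y` (block `σ(y_0)` starting at coordinate `0`): for every `j`,
the word `σ(y_j)` is read in `x` starting at position `cumLen σ y j - r`. -/
def IsShiftedImage (σ : ℕ → List ℕ) (y : ℤ → ℕ) (r : ℤ) (x : ℤ → ℕ) : Prop :=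
  ∀ j : ℤ, factorWord x (cumLen σ y j - r) (σ (y j)).length = σ (y j)

/-! The two words are shown to *diverge*: they share a prefix followed by two different
letters. At level 1 this is the hat property of `τ₀`. Going up a level, the prefixes
prescribed by `(P_k)` write `τ_n(v_{i})` and `τ_n(v_{i+1})` as `p v_{i+1} …` and `p v_i …`
for one and the same word `p`, so `τ_{[0,n+1)}(v_i)` and `τ_{[0,n+1)}(v_{i+1})` inherit the
divergence of `τ_{[0,n)}(v_{i+1})` and `τ_{[0,n)}(v_i)`. -/

def Diverge {α : Type*} (u w : List α) : Prop :=
  ∃ (p s t : List α) (a b : α), a ≠ b ∧ u = p ++ a :: s ∧ w = p ++ b :: t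

namespace Diverge

variable {α β : Type*}

theorem symm {u w : List α} (h : Diverge u w) : Diverge w u := by
  obtain ⟨p, s, t, a, b, hab, hu, hw⟩ := h
  exact ⟨p, t, s, b, a, hab.symm, hw, hu⟩

theorem not_prefix {u w : List α} (h : Diverge u w) : ¬ u <+: w := by
  obtain ⟨p, s, t, a, b, hab, rfl, rfl⟩ := h
  rw [List.prefix_append_right_inj, List.cons_prefix_cons]
  exact fun h => hab h.1

theorem of_head_ne {a b : α} (hab : a ≠ b) (s t : List α) : Diverge (a :: s) (b :: t) :=
  ⟨[], s, t, a, b, hab, rfl, rfl⟩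

theorem flatMap_of_prefix {σ : α → List β} {a b : α} (h : Diverge (σ a) (σ b))
    {p u w : List α} (hu : p ++ [a] <+: u) (hw : p ++ [b] <+: w) :
    Diverge (u.flatMap σ) (w.flatMap σ) := by
  obtain ⟨q, s', t', c, d, hcd, ha, hb⟩ := h
  obtain ⟨s, rfl⟩ := hu
  obtain ⟨t, rfl⟩ := hw
  exact ⟨p.flatMap σ ++ q, s' ++ s.flatMap σ, t' ++ t.flatMap σ, c, d, hcd,
    by simp [ha], by simp [hb]⟩

end Diverge

theorem prefix_pkPrefix {k a : ℕ} (h : a < k) :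
    (List.range a).flatMap (fun j => [j, j]) ++ [a, a + 1] <+: pkPrefix k a := by
  obtain ⟨r, hr⟩ : ∃ r, k + 1 - a = r + 2 := ⟨k - 1 - a, by omega⟩
  simp [pkPrefix, hr, List.range_succ_eq_map, List.map_map, Function.comp_def]

theorem prefix_pkPrefix_succ (k a : ℕ) :
    (List.range a).flatMap (fun j => [j, j]) ++ [a, a] <+: pkPrefix k (a + 1) := by
  simp [pkPrefix, List.range_succ]

theorem tauIter_zero_one (τ : ℕ → ℕ → List ℕ) (a : ℕ) : tauIter τ 0 1 a = τ 0 a := by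
  simp [tauIter]

theorem tauIter_zero_succ (τ : ℕ → ℕ → List ℕ) (n a : ℕ) :
    tauIter τ 0 (n + 1) a = (τ n a).flatMap (tauIter τ 0 n) := by
  rw [tauIter, Nat.zero_add]

section PropertyPk

variable {k : ℕ} {m : ℕ → ℕ} {τ : ℕ → ℕ → List ℕ}

theorem PropertyPk.diverge_tau_zero (hP : PropertyPk k m τ) {a : ℕ} (ha : a < k) :
    Diverge (τ 0 a) (τ 0 (a + 1)) := by
  have hm : a + 1 < m 1 := by have := hP.1 1 le_rfl; omega
  have hm' : a < m 1 := by omega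
  obtain ⟨c, s, hc⟩ := List.exists_cons_of_ne_nil (hP.2.1 0 a hm').1
  obtain ⟨d, t, hd⟩ := List.exists_cons_of_ne_nil (hP.2.1 0 (a + 1) hm).1
  rw [hc, hd]
  refine Diverge.of_head_ne (fun hcd => ?_) s t
  exact hP.2.2.1 a (a + 1) hm' hm (by omega) c (by simp [hc]) (by simp [hd, hcd])

theorem PropertyPk.diverge_tauIter (hP : PropertyPk k m τ) {a : ℕ} (ha : a < k) {n : ℕ}
    (hn : 1 ≤ n) : Diverge (tauIter τ 0 n a) (tauIter τ 0 n (a + 1)) := by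
  induction n, hn using Nat.le_induction with
  | base => simpa only [tauIter_zero_one] using hP.diverge_tau_zero ha
  | succ n hn ih =>
    have hpre := hP.2.2.2.2.1 n hn
    rw [tauIter_zero_succ, tauIter_zero_succ]
    refine ih.symm.flatMap_of_prefix (p := (List.range a).flatMap (fun j => [j, j]) ++ [a])
      ?_ ?_
    · simpa using (prefix_pkPrefix ha).trans (hpre a ha.le)
    · simpa using (prefix_pkPrefix_succ k a).trans (hpre (a + 1) ha)

end PropertyPk

theorem not_prefix_dependent_of_propertyPk_general
    (k : ℕ) (m : ℕ → ℕ) (τ : ℕ → ℕ → List ℕ) (hP : PropertyPk k m τ)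
    (n : ℕ) (hn : 1 ≤ n) (i : ℕ) (hi1 : 1 ≤ i) (hik : i ≤ k) :
    ¬ (tauIter τ 0 n (i - 1) <+: tauIter τ 0 n i) ∧
    ¬ (tauIter τ 0 n i <+: tauIter τ 0 n (i - 1)) := by
  obtain ⟨a, rfl⟩ : ∃ a, i = a + 1 := ⟨i - 1, by omega⟩
  have h := hP.diverge_tauIter (Nat.lt_of_succ_le hik) hn
  exact ⟨h.not_prefix, h.symm.not_prefix⟩

/-- Under Property `(P_k)`, for `n ≥ 1` and `1 ≤ i ≤ k`, the words
`τ_{[0,n)}(v_{i,n})` and `τ_{[0,n)}(v_{i+1,n})` are not prefix dependent.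
(Letters are `0`-based: `v_{i,n}` is `i - 1`.) -/
theorem not_prefix_dependent_of_propertyPk
    (k : ℕ) (hk : 1 ≤ k) (m : ℕ → ℕ) (τ : ℕ → ℕ → List ℕ) (hP : PropertyPk k m τ)
    (n : ℕ) (hn : 1 ≤ n) (i : ℕ) (hi1 : 1 ≤ i) (hik : i ≤ k) :
    ¬ (tauIter τ 0 n (i - 1) <+: tauIter τ 0 n i) ∧
    ¬ (tauIter τ 0 n i <+: tauIter τ 0 n (i - 1)) :=
  not_prefix_dependent_of_propertyPk_general k m τ hP n hn i hi1 hik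

end AsympSOE
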